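/- Let k be a field of characteristic different from 2. Let R = k[x,y], R^{S₂} ⊆ R the subalgebra of symmetric polynomials, and B = R ⊗_{R^{S₂}} R. Then the map ψ : B ⊕ B → R ⊗_{R^{S₂}} R ⊗_{R^{S₂}} R determined by ψ(f⊗g, h⊗l) = f⊗1⊗g + h⊗(y−x)⊗l is a well-defined isomorphism of (R,R)-bimodules (where R acts on the left via the first tensor factor and on the right via the last tensor factor). In particular B ⊗_R B ≅ B ⊕ B as (R,R)-bimodules. -/

import Mathlib

set_option synthInstance.maxHeartbeats 1000000
set_option maxHeartbeats 4000000

open MvPolynomial TensorProduct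

/-- `R = k[x,y]` (`x = X 0`, `y = X 1`). -/
noncomputable abbrev stmt10R (k : Type) [Field k] := MvPolynomial (Fin 2) k

/-- `R^{S₂}`, the subalgebra of symmetric polynomials. -/
noncomputable abbrev stmt10S (k : Type) [Field k] : Subalgebra k (stmt10R k) :=
  MvPolynomial.symmetricSubalgebra (Fin 2) k

/-- The Soergel bimodule `B = R ⊗_{R^{S₂}} R`. -/
noncomputable abbrev stmt10B (k : Type) [Field k] :=
  (stmt10R k) ⊗[↥(stmt10S k)] (stmt10R k)

/-- The triple tensor product `R ⊗_{R^{S₂}} R ⊗_{R^{S₂}} R`,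
realized as `(R ⊗_{R^{S₂}} R) ⊗_{R^{S₂}} R`; this is the canonical identification of
`B ⊗_R B`. -/
noncomputable abbrev stmt10T (k : Type) [Field k] :=
  (stmt10B k) ⊗[↥(stmt10S k)] (stmt10R k)

noncomputable instance (k : Type) [Field k] : CommRing (stmt10T k) :=
  @Algebra.TensorProduct.instCommRing (↥(stmt10S k)) (stmt10B k) (stmt10R k) _ _ _ _ _

noncomputable instance (k : Type) [Field k] : Algebra k (stmt10T k) :=
  @Algebra.TensorProduct.leftAlgebra (↥(stmt10S k)) k (stmt10B k) (stmt10R k)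
    _ _ _ _ _ _ _ _

/-!
Write `δ = y - x` and `σ` for the swap of the variables. Every `p ∈ R` decomposes as
`p = (p + σ p)/2 + ((p - σ p)/(2δ)) δ` with both coefficients symmetric, since `p - σ p` vanishes
modulo `δ` and is anti-invariant; and `s + t δ = 0` with `s, t` symmetric forces `s = t = 0` after
applying `σ` (this is where `2 ≠ 0` enters). So `R` is free over `R^{S₂}` with basis `{1, δ}`, and
tensoring the middle factor of `R ⊗ R ⊗ R` with this basis splits it as `B ⊕ B`, the summands
being `f ⊗ 1 ⊗ g` and `h ⊗ δ ⊗ l`. The splitting only touches the middle factor, so it commutes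
with the outer actions of `R`.
-/

namespace TensorProduct

section

variable {S M R N : Type*} [CommSemiring S] [AddCommMonoid M] [AddCommMonoid R] [AddCommMonoid N]
  [Module S M] [Module S R] [Module S N]

variable (M N) in
def insertMiddle (e : R) : M ⊗[S] N →ₗ[S] (M ⊗[S] R) ⊗[S] N :=
  ((TensorProduct.mk S M R).flip e).rTensor N

@[simp]
lemma insertMiddle_tmul (e : R) (m : M) (n : N) :
    insertMiddle M N e (m ⊗ₜ[S] n) = (m ⊗ₜ[S] e) ⊗ₜ[S] n :=
  rfl

variable (M N) in
def contractMiddle (φ : R →ₗ[S] S) : (M ⊗[S] R) ⊗[S] N →ₗ[S] M ⊗[S] N :=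
  ((TensorProduct.rid S M).toLinearMap ∘ₗ φ.lTensor M).rTensor N

@[simp]
lemma contractMiddle_tmul (φ : R →ₗ[S] S) (m : M) (r : R) (n : N) :
    contractMiddle M N φ ((m ⊗ₜ[S] r) ⊗ₜ[S] n) = (φ r • m) ⊗ₜ[S] n :=
  rfl

variable (M N) in
noncomputable def prodEquivOfBasisMiddle (b : Module.Basis (Fin 2) S R) :
    ((M ⊗[S] N) × (M ⊗[S] N)) ≃ₗ[S] (M ⊗[S] R) ⊗[S] N :=
  LinearEquiv.ofLinearMap ((insertMiddle M N (b 0)).coprod (insertMiddle M N (b 1)))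
    ((contractMiddle M N (b.coord 0)).prod (contractMiddle M N (b.coord 1)))
    (by
      refine TensorProduct.ext_threefold fun m r n => ?_
      conv_rhs => rw [← b.sum_repr r, Fin.sum_univ_two, tmul_add, add_tmul]
      simp [smul_tmul])
    (by ext m n <;> simp [Module.Basis.coord_apply])

@[simp]
lemma prodEquivOfBasisMiddle_apply (b : Module.Basis (Fin 2) S R) (x y : M ⊗[S] N) :
    prodEquivOfBasisMiddle M N b (x, y) = insertMiddle M N (b 0) x + insertMiddle M N (b 1) y :=
  rfl

lemma prodEquivOfBasisMiddle_tmul (b : Module.Basis (Fin 2) S R) (m : M) (n : N) (m' : M)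
    (n' : N) :
    prodEquivOfBasisMiddle M N b (m ⊗ₜ n, m' ⊗ₜ n')
      = (m ⊗ₜ[S] b 0) ⊗ₜ[S] n + (m' ⊗ₜ[S] b 1) ⊗ₜ[S] n' :=
  rfl

end

section

variable {S A R C : Type*} [CommSemiring S] [Semiring A] [Semiring R] [Semiring C]
  [Algebra S A] [Algebra S R] [Algebra S C]

lemma insertMiddle_mul_mul (e : R) (a : A) (c : C) (x : A ⊗[S] C) :
    insertMiddle A C e ((a ⊗ₜ[S] 1) * x * (1 ⊗ₜ[S] c))
      = ((a ⊗ₜ[S] 1) ⊗ₜ[S] 1) * insertMiddle A C e x * ((1 ⊗ₜ[S] 1) ⊗ₜ[S] c) := by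
  induction x using TensorProduct.induction_on with
  | zero => simp
  | tmul m n => simp [Algebra.TensorProduct.tmul_mul_tmul]
  | add u v hu hv => simp only [mul_add, add_mul, map_add, hu, hv]

lemma prodEquivOfBasisMiddle_mul_mul (b : Module.Basis (Fin 2) S R) (a : A) (c : C)
    (x y : A ⊗[S] C) :
    prodEquivOfBasisMiddle A C b ((a ⊗ₜ[S] 1) * x * (1 ⊗ₜ[S] c), (a ⊗ₜ[S] 1) * y * (1 ⊗ₜ[S] c))
      = ((a ⊗ₜ[S] 1) ⊗ₜ[S] 1) * prodEquivOfBasisMiddle A C b (x, y) * ((1 ⊗ₜ[S] 1) ⊗ₜ[S] c) := by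
  simp only [prodEquivOfBasisMiddle_apply, insertMiddle_mul_mul, mul_add, add_mul]

end

end TensorProduct

namespace MvPolynomial

open Equiv

theorem X_sub_X_dvd_sub_rename_swap {σ R : Type*} [CommRing R] [DecidableEq σ] (i j : σ)
    (p : MvPolynomial σ R) : X i - X j ∣ p - rename (swap i j) p := by
  set I := Ideal.span {(X i - X j : MvPolynomial σ R)}
  have hij : Ideal.Quotient.mk I (X i) = Ideal.Quotient.mk I (X j) :=
    Ideal.Quotient.eq.2 (Ideal.subset_span rfl)
  have hswap : (Ideal.Quotient.mkₐ R I).comp (rename (swap i j)) = Ideal.Quotient.mkₐ R I := by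
    ext l
    simp only [AlgHom.comp_apply, rename_X, Ideal.Quotient.mkₐ_eq_mk, swap_apply_def]
    split_ifs <;> subst_vars <;> simp [hij]
  rw [← Ideal.mem_span_singleton, ← Ideal.Quotient.eq]
  exact (congrArg (· p) hswap).symm

theorem mem_symmetricSubalgebra_fin_two_iff {R : Type*} [CommSemiring R]
    {p : MvPolynomial (Fin 2) R} :
    p ∈ symmetricSubalgebra (Fin 2) R ↔ rename (swap 0 1) p = p := by
  refine ⟨fun h => h _, fun h e => ?_⟩
  obtain rfl | rfl : e = 1 ∨ e = swap 0 1 := by revert e; decide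
  · exact rename_id_apply p
  · exact h

variable {k : Type*} [Field k]

local notation "δ" => (X 1 - X 0 : MvPolynomial (Fin 2) k)

theorem rename_swap_X_sub_X : rename (swap 0 1) δ = -δ := by
  simp

theorem X_sub_X_ne_zero : δ ≠ 0 :=
  sub_ne_zero.2 (X_injective.ne (by decide))

theorem linearIndependent_one_X_sub_X (h2 : (2 : k) ≠ 0) :
    LinearIndependent (symmetricSubalgebra (Fin 2) k) ![1, δ] := by
  refine LinearIndependent.pair_iff.2 fun s t hst => ?_
  have hs := mem_symmetricSubalgebra_fin_two_iff.1 s.2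
  have ht := mem_symmetricSubalgebra_fin_two_iff.1 t.2
  simp only [Subalgebra.smul_def, smul_eq_mul, mul_one] at hst
  have hst' : (s : MvPolynomial (Fin 2) k) - t * δ = 0 := by
    have := congrArg (rename (swap 0 1)) hst
    simp only [map_add, map_mul, hs, ht, rename_swap_X_sub_X, map_zero] at this
    linear_combination this
  have h2s : C 2 * (s : MvPolynomial (Fin 2) k) = 0 := by
    rw [map_ofNat]
    linear_combination hst + hst'
  obtain rfl : s = 0 := Subtype.ext ((mul_eq_zero.1 h2s).resolve_left (C_ne_zero.2 h2))
  refine ⟨rfl, Subtype.ext ((mul_eq_zero.1 ?_).resolve_right X_sub_X_ne_zero)⟩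
  simpa using hst

theorem top_le_span_one_X_sub_X (h2 : (2 : k) ≠ 0) :
    ⊤ ≤ Submodule.span (symmetricSubalgebra (Fin 2) k) (Set.range ![1, δ]) := by
  intro p _
  rw [Matrix.range_cons_cons_empty, Submodule.mem_span_pair]
  obtain ⟨q, hq⟩ : δ ∣ p - rename (swap 0 1) p := by
    simpa [swap_comm] using X_sub_X_dvd_sub_rename_swap (R := k) 1 0 p
  have hq_symm : rename (swap 0 1) q = q := by
    refine mul_left_cancel₀ (X_sub_X_ne_zero (k := k)) ?_
    have := congrArg (rename (swap 0 1)) hq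
    rw [map_sub, map_mul, rename_swap_X_sub_X, rename_leftInverse (swap_apply_self 0 1)] at this
    linear_combination this + hq
  refine ⟨⟨(2⁻¹ : k) • (p + rename (swap 0 1) p), ?_⟩, ⟨(2⁻¹ : k) • q, ?_⟩, ?_⟩
  · rw [mem_symmetricSubalgebra_fin_two_iff, map_smul, map_add,
      rename_leftInverse (swap_apply_self 0 1), add_comm]
  · rw [mem_symmetricSubalgebra_fin_two_iff, map_smul, hq_symm]
  · simp only [Subalgebra.smul_def, smul_eq_mul, mul_one]
    rw [smul_mul_assoc, mul_comm, ← hq, ← smul_add,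
      show p + rename (swap 0 1) p + (p - rename (swap 0 1) p) = (2 : k) • p by module,
      inv_smul_smul₀ h2]

noncomputable def basisFinTwoOverSymmetric (h2 : (2 : k) ≠ 0) :
    Module.Basis (Fin 2) (symmetricSubalgebra (Fin 2) k) (MvPolynomial (Fin 2) k) :=
  .mk (linearIndependent_one_X_sub_X h2) (top_le_span_one_X_sub_X h2)

@[simp]
theorem basisFinTwoOverSymmetric_zero (h2 : (2 : k) ≠ 0) : basisFinTwoOverSymmetric h2 0 = 1 := by
  simp [basisFinTwoOverSymmetric]

@[simp]
theorem basisFinTwoOverSymmetric_one (h2 : (2 : k) ≠ 0) : basisFinTwoOverSymmetric h2 1 = δ := by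
  simp [basisFinTwoOverSymmetric]

end MvPolynomial

theorem stmt_10 (k : Type) [Field k] (hchar : (2 : k) ≠ 0) :
    ∃ ψ : (stmt10B k × stmt10B k) →ₗ[k] stmt10T k,
      (∀ f g h l : stmt10R k,
        ψ (f ⊗ₜ[↥(stmt10S k)] g, h ⊗ₜ[↥(stmt10S k)] l)
          = (f ⊗ₜ[↥(stmt10S k)] (1 : stmt10R k)) ⊗ₜ[↥(stmt10S k)] g
            + (h ⊗ₜ[↥(stmt10S k)] (X 1 - X 0 : stmt10R k)) ⊗ₜ[↥(stmt10S k)] l) ∧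
      Function.Bijective ψ ∧
      (∀ (r r' : stmt10R k) (m : stmt10B k × stmt10B k),
        ψ ((r ⊗ₜ[↥(stmt10S k)] (1 : stmt10R k)) * m.1
              * ((1 : stmt10R k) ⊗ₜ[↥(stmt10S k)] r'),
           (r ⊗ₜ[↥(stmt10S k)] (1 : stmt10R k)) * m.2
              * ((1 : stmt10R k) ⊗ₜ[↥(stmt10S k)] r'))
          = ((r ⊗ₜ[↥(stmt10S k)] (1 : stmt10R k)) ⊗ₜ[↥(stmt10S k)] (1 : stmt10R k))
              * ψ m
              * (((1 : stmt10R k) ⊗ₜ[↥(stmt10S k)] (1 : stmt10R k))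
                  ⊗ₜ[↥(stmt10S k)] r')) := by
  let ψ : (stmt10B k × stmt10B k) ≃ₗ[stmt10S k] stmt10T k :=
    TensorProduct.prodEquivOfBasisMiddle _ _ (basisFinTwoOverSymmetric hchar)
  refine ⟨ψ.toLinearMap.restrictScalars k, fun f g h l => ?_, ψ.bijective,
    fun r r' m => TensorProduct.prodEquivOfBasisMiddle_mul_mul _ r r' m.1 m.2⟩
  have := TensorProduct.prodEquivOfBasisMiddle_tmul (basisFinTwoOverSymmetric hchar) f g h l
  rw [basisFinTwoOverSymmetric_zero, basisFinTwoOverSymmetric_one] at this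
  exact this
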